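/- Let φ : [0,∞) → ℝ be continuous and nondecreasing with φ(0) = 0. If Σ_{i∈I, j≥0} m_{i,j} φ(2^{−j}) = ∞ and r^d = o(φ(r)) as r → 0, then with probability one the set L_{φ^{1/d}} = {x ∈ 𝕋^d : 𝔡(x, x_λ) < φ(2^{−⟨λ⟩})^{1/d} for infinitely many (i,λ) ∈ M} has full Lebesgue (Haar) measure in 𝕋^d. -/

import Mathlib

open MeasureTheory Filter Set Topology
open scoped ENNReal NNReal Classical

noncomputable section

namespace WaveletFractal

/-! ### Gauge functions -/

/-- The class `𝔇` of gauge functions. -/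
def IsGauge (g : ℝ → ℝ) : Prop :=
  g 0 = 0 ∧ Tendsto g (𝓝[>] (0:ℝ)) (𝓝 0) ∧ ∃ ε > 0, MonotoneOn g (Icc (0:ℝ) ε)

/-- The class `𝔇_d`: gauge functions such that `r ↦ g r / r^d` is positive and
nonincreasing near `0`. -/
def IsGaugeD (d : ℕ) (g : ℝ → ℝ) : Prop :=
  IsGauge g ∧ ∃ ε > 0, (∀ r ∈ Ioc (0:ℝ) ε, 0 < g r / r ^ d) ∧
    AntitoneOn (fun r => g r / r ^ d) (Ioc (0:ℝ) ε)

/-- The gauge function `g_d : r ↦ r^d * inf_{0 < ρ ≤ r} g ρ / ρ^d`. -/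
def gD (d : ℕ) (g : ℝ → ℝ) : ℝ → ℝ :=
  fun r => r ^ d * sInf ((fun ρ => g ρ / ρ ^ d) '' Ioc (0:ℝ) r)

/-- `GaugePrec gb g` means `gb ≺ g`: `gb/g` tends monotonically to infinity at `0`. -/
def GaugePrec (gb g : ℝ → ℝ) : Prop :=
  ∃ ε > 0, AntitoneOn (fun r => gb r / g r) (Ioc (0:ℝ) ε) ∧
    Tendsto (fun r => gb r / g r) (𝓝[>] (0:ℝ)) atTop

/-- Membership in the class `𝒟`: `log (g₁ r) / log r` has a limit as `r → 0⁺`. -/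
def MemD (g : ℝ → ℝ) : Prop :=
  ∃ γ : ℝ, Tendsto (fun r => Real.log (gD 1 g r) / Real.log r) (𝓝[>] (0:ℝ)) (𝓝 γ)

/-- The class `𝒟₁ = 𝒟 ∩ 𝔇₁`. -/
def MemD1 (g : ℝ → ℝ) : Prop := MemD g ∧ IsGaugeD 1 g

/-- The Hausdorff `g`-measure associated with a gauge function `g`. -/
def hausdorffGauge {X : Type*} [EMetricSpace X] [MeasurableSpace X] [BorelSpace X]
    (g : ℝ → ℝ) : Measure X :=
  Measure.mkMetric (fun r => ENNReal.ofReal (g r.toReal))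

/-! ### Net measures and large intersection classes in `ℝ^d` and on the torus -/

/-- The `c`-adic cube `c^{-j}(k + [0,1)^d)` in `ℝ^d`. -/
def cadicCube (d c : ℕ) (j : ℤ) (k : Fin d → ℤ) : Set (Fin d → ℝ) :=
  {x | ∀ i, (k i : ℝ) * (c:ℝ) ^ (-j) ≤ x i ∧ x i < ((k i : ℝ) + 1) * (c:ℝ) ^ (-j)}

/-- `ε_g` for `g ∈ 𝔇_d`. -/
def epsGauge (d : ℕ) (g : ℝ → ℝ) : ℝ :=
  sSup {ε : ℝ | ε ∈ Ioc (0:ℝ) 1 ∧ MonotoneOn g (Icc 0 ε) ∧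
    AntitoneOn (fun r => g r / r ^ d) (Ioc 0 ε)}

/-- The set coded by an element of `Option (ℤ × (Fin d → ℤ))`. -/
def netSet (d c : ℕ) : Option (ℤ × (Fin d → ℤ)) → Set (Fin d → ℝ)
  | none => ∅
  | some (j, k) => cadicCube d c j k

/-- The weight `g (diam λ)` of a coded `c`-adic cube. -/
def netWeight (c : ℕ) (g : ℝ → ℝ) : Option (ℤ × (Fin d → ℤ)) → ℝ≥0∞
  | none => 0
  | some (j, _) => ENNReal.ofReal (g ((c:ℝ) ^ (-j)))

/-- The outer net measure `M^g_∞` in `ℝ^d`. -/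
def netMeasure (d c : ℕ) (g : ℝ → ℝ) (F : Set (Fin d → ℝ)) : ℝ≥0∞ :=
  ⨅ (f : ℕ → Option (ℤ × (Fin d → ℤ)))
    (_ : ∀ p j k, f p = some (j, k) → (c:ℝ) ^ (-j) < epsGauge d g)
    (_ : F ⊆ ⋃ p, netSet d c (f p)),
      ∑' p, netWeight c g (f p)

/-- The class `G^g(V)` of subsets of `ℝ^d` with large intersection in `V` with
respect to `g ∈ 𝔇_d`. -/
def largeIntersection (d : ℕ) (g : ℝ → ℝ) (V : Set (Fin d → ℝ)) :
    Set (Set (Fin d → ℝ)) :=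
  {F | IsGδ F ∧ ∀ gb : ℝ → ℝ, IsGaugeD d gb → GaugePrec gb g →
    ∀ U : Set (Fin d → ℝ), IsOpen U → U ⊆ V →
      netMeasure d 2 gb (F ∩ U) = netMeasure d 2 gb U}

/-- The `d`-dimensional torus `𝕋^d = ℝ^d/ℤ^d`. -/
abbrev Torus (d : ℕ) := Fin d → AddCircle (1:ℝ)

/-- The canonical surjection `φ : ℝ^d → 𝕋^d`. -/
def torusProj (d : ℕ) : (Fin d → ℝ) → Torus d := fun x i => (x i : AddCircle (1:ℝ))

/-- The class `G^g(V)` for `V ⊆ 𝕋^d`: membership is checked after pulling back by the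
canonical surjection. -/
def largeIntersectionT (d : ℕ) (g : ℝ → ℝ) (V : Set (Torus d)) : Set (Set (Torus d)) :=
  {F | torusProj d ⁻¹' F ∈ largeIntersection d g (torusProj d ⁻¹' V)}

/-! ### The random wavelet series -/

/-- The rescaled-translated wavelet `x ↦ 2^{dj/2} ψ(2^j x - k)`. -/
def waveletAt (d : ℕ) (ψ : (Fin d → ℝ) → ℝ) (j : ℤ) (k : Fin d → ℤ) :
    (Fin d → ℝ) → ℝ :=
  fun x => (2:ℝ) ^ ((d : ℝ) * (j : ℝ) / 2) * ψ (fun i => (2:ℝ) ^ j * x i - (k i : ℝ))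

/-- The wavelets `ψ^i`, `i ∈ I`, are in the Schwartz class and the family
`2^{dj/2} ψ^i(2^j · - k)` is an orthonormal basis of `L²(ℝ^d)`. -/
def IsWaveletBasis (d : ℕ) (ψ : Fin (2 ^ d - 1) → (Fin d → ℝ) → ℝ) : Prop :=
  (∀ i, ∃ Ψ : SchwartzMap (Fin d → ℝ) ℝ, ⇑Ψ = ψ i) ∧
  (∀ (i i' : Fin (2 ^ d - 1)) (j j' : ℤ) (k k' : Fin d → ℤ),
    ∫ x : Fin d → ℝ, waveletAt d (ψ i) j k x * waveletAt d (ψ i') j' k' x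
      = if i = i' ∧ j = j' ∧ k = k' then 1 else 0) ∧
  (∀ f : (Fin d → ℝ) → ℝ, MemLp f 2 (volume : Measure (Fin d → ℝ)) →
    (∀ (i : Fin (2 ^ d - 1)) (j : ℤ) (k : Fin d → ℤ),
      ∫ x : Fin d → ℝ, f x * waveletAt d (ψ i) j k x = 0) →
    f =ᵐ[(volume : Measure (Fin d → ℝ))] 0)

/-- The canonical representative in `[0,1)^d` of a point of the torus. -/
def torusRep (d : ℕ) (x : Torus d) : Fin d → ℝ :=
  fun i => ((AddCircle.equivIco (1:ℝ) 0 (x i)) : ℝ)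

/-- The periodized wavelet `Ψ^i_λ` on the torus, for `λ` the dyadic cube of generation
`j` indexed by `k`. -/
def periodizedWavelet (d : ℕ) (ψ : (Fin d → ℝ) → ℝ) (j : ℕ) (k : Fin d → ℤ) :
    Torus d → ℝ :=
  fun x => ∑' m : Fin d → ℤ,
    ψ (fun i => (2:ℝ) ^ (j:ℤ) * (torusRep d x i - (m i : ℝ)) - (k i : ℝ))

/-- `n ∈ 𝒩_i`. -/
def memN (d : ℕ) (m : Fin (2 ^ d - 1) → ℕ → ℕ) (i : Fin (2 ^ d - 1)) (n : ℕ) : Prop :=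
  ∃ j : ℕ, n < ∑ j' ∈ Finset.range (j + 1), m i j'

/-- The scale `j_{i,n}` associated with the `n`-th random point in direction `i`. -/
def scaleOf (d : ℕ) (m : Fin (2 ^ d - 1) → ℕ → ℕ) (i : Fin (2 ^ d - 1)) (n : ℕ) : ℕ :=
  sInf {j : ℕ | n < ∑ j' ∈ Finset.range (j + 1), m i j'}

/-- The index `k` of the dyadic cube of generation `j` containing a point of the torus. -/
def cubeIndex (d : ℕ) (j : ℕ) (x : Torus d) : Fin d → ℤ :=
  fun i => ⌊torusRep d x i * 2 ^ j⌋

/-- The random set `M` of indices `(i, λ)` (coded by `(i, j, k)`) of the nonvanishing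
wavelet coefficients. -/
def Mset {Ω : Type*} (d : ℕ) (m : Fin (2 ^ d - 1) → ℕ → ℕ)
    (XX : Fin (2 ^ d - 1) → ℕ → Ω → Torus d) (ω : Ω) :
    Set (Fin (2 ^ d - 1) × ℕ × (Fin d → ℤ)) :=
  {p | ∃ n : ℕ, memN d m p.1 n ∧ p.2.1 = scaleOf d m p.1 n ∧
    p.2.2 = cubeIndex d (scaleOf d m p.1 n) (XX p.1 n ω)}

/-- The base point `x_λ` of the dyadic cube of generation `j` indexed by `k`. -/
def cubeBase (d : ℕ) (j : ℕ) (k : Fin d → ℤ) : Torus d :=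
  torusProj d (fun i => (k i : ℝ) / 2 ^ j)

/-- The random wavelet series `R`. -/
def waveletSeries {Ω : Type*} (d : ℕ) (hb : ℝ) (ψ : Fin (2 ^ d - 1) → (Fin d → ℝ) → ℝ)
    (m : Fin (2 ^ d - 1) → ℕ → ℕ) (XX : Fin (2 ^ d - 1) → ℕ → Ω → Torus d) (ω : Ω) :
    Torus d → ℝ :=
  fun x => ∑' p : Fin (2 ^ d - 1) × ℕ × (Fin d → ℤ),
    if p ∈ Mset d m XX ω then
      (2:ℝ) ^ (-(hb * (p.2.1 : ℝ))) * periodizedWavelet d (ψ p.1) p.2.1 p.2.2 x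
    else 0

/-- The random points are independent and uniformly distributed on the torus, and there
are at most `2^{dj}` nonzero coefficients at scale `j` in each direction. -/
structure IsRandomCubeModel {Ω : Type*} [MeasurableSpace Ω] (d : ℕ) (P : Measure Ω)
    (m : Fin (2 ^ d - 1) → ℕ → ℕ) (XX : Fin (2 ^ d - 1) → ℕ → Ω → Torus d) : Prop where
  dpos : 0 < d
  isProb : IsProbabilityMeasure P
  mbound : ∀ i j, m i j ≤ 2 ^ (d * j)
  meas : ∀ i n, Measurable (XX i n)
  law : ∀ i n, P.map (XX i n) = (volume : Measure (Torus d))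
  indep : ProbabilityTheory.iIndepFun
    (fun (p : Fin (2 ^ d - 1) × ℕ) ω => XX p.1 p.2 ω) P

/-- The Hölder exponent of `f : 𝕋^d → ℝ` at `x`, with values in `[0,∞]`. -/
def holderExpT (d : ℕ) (f : Torus d → ℝ) (x : Torus d) : ℝ≥0∞ :=
  sSup {H : ℝ≥0∞ | ∃ h : ℝ, 0 < h ∧ H = ENNReal.ofReal h ∧
    ∃ c > 0, ∃ δ > 0, ∃ Pf : Torus d → ℝ,
      (∃ Qp : MvPolynomial (Fin d) ℝ, ∃ ρ > 0, ∀ y : Fin d → ℝ, ‖y‖ < ρ →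
        Pf (torusProj d y) = MvPolynomial.eval y Qp) ∧
      ∀ x' : Torus d, dist x' x ≤ δ → |f x' - Pf (x' - x)| ≤ c * dist x' x ^ h}

/-- The iso-Hölder set `E_h`. -/
def EsetT (d : ℕ) (f : Torus d → ℝ) (h : ℝ≥0∞) : Set (Torus d) :=
  {x | holderExpT d f x = h}

/-- The set `Ẽ_h = {x : h_R(x) ≤ h}`. -/
def tildeEsetT (d : ℕ) (f : Torus d → ℝ) (h : ℝ≥0∞) : Set (Torus d) :=
  {x | holderExpT d f x ≤ h}

/-- The set `L_φ` of points of the torus approximated at rate `φ` by the base points of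
the cubes indexing the nonvanishing wavelet coefficients. -/
def LsetT {Ω : Type*} (d : ℕ) (m : Fin (2 ^ d - 1) → ℕ → ℕ)
    (XX : Fin (2 ^ d - 1) → ℕ → Ω → Torus d) (ω : Ω) (φ : ℝ → ℝ) : Set (Torus d) :=
  {x | {p : Fin (2 ^ d - 1) × ℕ × (Fin d → ℤ) | p ∈ Mset d m XX ω ∧
    dist x (cubeBase d p.2.1 p.2.2) < φ ((2:ℝ) ^ (-(p.2.1 : ℤ)))}.Infinite}

/-- The exponent `h_g = inf {h > 0 : Σ_{i,j} m_{i,j} g_d(2^{-h̲j/h}) = ∞}`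
(with `inf ∅ = ∞`). -/
def hGaugeW (d : ℕ) (m : Fin (2 ^ d - 1) → ℕ → ℕ) (hb : ℝ) (g : ℝ → ℝ) : ℝ≥0∞ :=
  sInf {H : ℝ≥0∞ | ∃ h : ℝ, 0 < h ∧ H = ENNReal.ofReal h ∧
    ∑' p : Fin (2 ^ d - 1) × ℕ,
      (m p.1 p.2 : ℝ≥0∞) * ENNReal.ofReal (gD d g ((2:ℝ) ^ (-(hb * (p.2 : ℝ)) / h))) = ∞}

/-- The exponent `h̄ = h_{Id^d}`. -/
def hbarW (d : ℕ) (m : Fin (2 ^ d - 1) → ℕ → ℕ) (hb : ℝ) : ℝ≥0∞ :=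
  hGaugeW d m hb (fun r => r ^ d)

/-- The class `𝔚` of moduli of continuity. -/
def IsModulus (w : ℝ → ℝ) : Prop :=
  w 0 = 0 ∧ (∃ ε > 0, StrictMonoOn w (Icc (0:ℝ) ε) ∧ ContinuousOn w (Icc (0:ℝ) ε)) ∧
  (∃ c : ℝ, 1 < c ∧ ∀ᶠ δ in 𝓝[>] (0:ℝ), c * w δ ≤ w (2 * δ)) ∧
  (∃ C : ℝ, ∀ᶠ δ in 𝓝[>] (0:ℝ), w (2 * δ) ≤ C * w δ)

/-- The class `𝔚_{h̲}`: moduli of continuity with `w(δ) = o(δ^{h̲})` at `0`. -/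
def IsModulusO (hb : ℝ) (w : ℝ → ℝ) : Prop :=
  IsModulus w ∧ w =o[𝓝[>] (0:ℝ)] fun δ => δ ^ hb

/-- `w` is a modulus of continuity of `f : 𝕋^d → ℝ` at `x`. -/
def IsPtwiseModulusAtT (d : ℕ) (f : Torus d → ℝ) (w : ℝ → ℝ) (x : Torus d) : Prop :=
  ∃ c > 0, ∃ δ > 0, ∃ Pf : Torus d → ℝ,
    (∃ Qp : MvPolynomial (Fin d) ℝ, ∃ ρ > 0, ∀ y : Fin d → ℝ, ‖y‖ < ρ →
      Pf (torusProj d y) = MvPolynomial.eval y Qp) ∧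
    ∀ x' : Torus d, dist x' x ≤ δ → |f x' - Pf (x' - x)| ≤ c * w (dist x' x)

/-- `F_w`: the set of points at which `w` is not a modulus of continuity of `f`. -/
def badModulusSetT (d : ℕ) (f : Torus d → ℝ) (w : ℝ → ℝ) : Set (Torus d) :=
  {x | ¬ IsPtwiseModulusAtT d f w x}


variable {Ω : Type*} [MeasurableSpace Ω] {d : ℕ} {P : Measure Ω}
  {m : Fin (2 ^ d - 1) → ℕ → ℕ} {XX : Fin (2 ^ d - 1) → ℕ → Ω → Torus d}

open ProbabilityTheory

/-! Fix a direction `i` along which `Σ_j m_{i,j} φ(2^{-j})` diverges and a point `x`. The events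
`𝔡(x, x_{λ_{i,n}}) < φ(2^{-j_{i,n}})^{1/d}` are independent, and once `2^{-j} ≤ φ(2^{-j})^{1/d}/4`
(which `r^d = o(φ(r))` guarantees for large `j`) the event contains `X_{i,n} ∈ B̄(x, φ^{1/d}/2)`,
of Haar measure `min(1, φ(2^{-j_{i,n}}))`. Every scale `j` is taken by exactly `m_{i,j}` indices
`n`, so the probabilities sum to at least `Σ_j m_{i,j} min(1, φ(2^{-j})) = ∞`, and by the second
Borel–Cantelli lemma `x ∈ L_{φ^{1/d}}` almost surely. Fubini's theorem turns "for every `x`,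
almost surely" into "almost surely, for almost every `x`". -/

theorem tsum_eq_top_of_eventually_le {f g : ℕ → ℝ≥0∞} (hf : ∀ j, f j ≠ ∞)
    (hfg : ∀ᶠ j in atTop, f j ≤ g j) (h : ∑' j, f j = ∞) : ∑' j, g j = ∞ := by
  obtain ⟨N, hN⟩ := eventually_atTop.1 hfg
  rw [← ENNReal.summable.sum_add_tsum_nat_add' (k := N)] at h
  have htail : ∑' j, f (j + N) = ∞ := by
    simpa [ENNReal.add_eq_top, ENNReal.sum_ne_top.2 fun j _ => hf j] using h
  refine top_unique (htail.symm.le.trans ?_)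
  calc ∑' j, f (j + N) ≤ ∑' j, g (j + N) := ENNReal.tsum_le_tsum fun j => hN _ (by omega)
    _ ≤ ∑' j, g j := ENNReal.tsum_comp_le_tsum_of_injective (add_left_injective N) g

theorem tsum_mul_min_one_eq_top {m : ℕ → ℕ} {b : ℕ → ℝ≥0∞} (hb : ∀ j, b j ≠ ∞)
    (h : ∑' j, (m j : ℝ≥0∞) * b j = ∞) : ∑' j, (m j : ℝ≥0∞) * min 1 (b j) = ∞ := by
  by_contra hfin
  have hsmall : ∀ᶠ j in atTop, (m j : ℝ≥0∞) * min 1 (b j) < 1 :=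
    (ENNReal.tendsto_atTop_zero_of_tsum_ne_top hfin).eventually_lt_const zero_lt_one
  refine hfin (tsum_eq_top_of_eventually_le
    (fun j => ENNReal.mul_ne_top (ENNReal.natCast_ne_top _) (hb j))
    (hsmall.mono fun j hj => ?_) h)
  rcases Nat.eq_zero_or_pos (m j) with hm | hm
  · simp [hm]
  · have hmin : min 1 (b j) < 1 :=
      (le_mul_of_one_le_left zero_le (by exact_mod_cast hm)).trans_lt hj
    rw [min_eq_right (min_lt_iff.1 hmin |>.resolve_left (lt_irrefl 1)).le]

section Scales

variable (m) (i : Fin (2 ^ d - 1))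

theorem le_scaleOf {n J : ℕ} (hn : memN d m i n) (hJ : ∑ j ∈ Finset.range J, m i j ≤ n) :
    J ≤ scaleOf d m i n := by
  refine le_csInf hn fun j (hj : n < ∑ j' ∈ Finset.range (j + 1), m i j') => ?_
  by_contra! hjJ
  have := Finset.sum_le_sum_of_subset (f := m i)
    (Finset.range_subset_range.2 (show j + 1 ≤ J by omega))
  omega

theorem scaleOf_eq_of_mem_Ico {n J : ℕ}
    (hn : n ∈ Finset.Ico (∑ j ∈ Finset.range J, m i j) (∑ j ∈ Finset.range (J + 1), m i j)) :
    scaleOf d m i n = J := by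
  rw [Finset.mem_Ico] at hn
  exact le_antisymm (Nat.sInf_le hn.2) (le_scaleOf m i ⟨J, hn.2⟩ hn.1)

theorem sum_range_partialSum_comp_scaleOf {M : Type*} [AddCommMonoid M] (f : ℕ → M) (J : ℕ) :
    ∑ n ∈ Finset.range (∑ j ∈ Finset.range J, m i j), f (scaleOf d m i n)
      = ∑ j ∈ Finset.range J, m i j • f j := by
  induction J with
  | zero => simp
  | succ J ih =>
    have hle : ∑ j ∈ Finset.range J, m i j ≤ ∑ j ∈ Finset.range (J + 1), m i j :=
      Finset.sum_le_sum_of_subset (Finset.range_subset_range.2 J.le_succ)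
    rw [← Finset.sum_range_add_sum_Ico _ hle, ih,
      Finset.sum_congr rfl fun n hn => congrArg f (scaleOf_eq_of_mem_Ico m i hn),
      Finset.sum_const, Nat.card_Ico, Finset.sum_range_succ (m i), Nat.add_sub_cancel_left,
      Finset.sum_range_succ]

variable {m i}

theorem tsum_comp_scaleOf
    (hm : Tendsto (fun J => ∑ j ∈ Finset.range J, m i j) atTop atTop) (f : ℕ → ℝ≥0∞) :
    ∑' n, f (scaleOf d m i n) = ∑' j, (m i j : ℝ≥0∞) * f j := by
  rw [ENNReal.tsum_eq_iSup_nat' hm, ENNReal.tsum_eq_iSup_nat]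
  simp only [sum_range_partialSum_comp_scaleOf, nsmul_eq_mul]

theorem memN_of_tendsto (hm : Tendsto (fun J => ∑ j ∈ Finset.range J, m i j) atTop atTop)
    (n : ℕ) : memN d m i n :=
  ((hm.comp (tendsto_add_atTop_nat 1)).eventually_gt_atTop n).exists

theorem tendsto_scaleOf (hm : Tendsto (fun J => ∑ j ∈ Finset.range J, m i j) atTop atTop) :
    Tendsto (scaleOf d m i) atTop atTop :=
  tendsto_atTop_atTop.2 fun J =>
    ⟨∑ j ∈ Finset.range J, m i j, fun n hn => le_scaleOf m i (memN_of_tendsto hm n) hn⟩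

theorem tendsto_sum_range_of_tsum_eq_top (hm : ∑' j, (m i j : ℝ≥0∞) = ∞) :
    Tendsto (fun J => ∑ j ∈ Finset.range J, m i j) atTop atTop := by
  refine tendsto_atTop_atTop_of_monotone
    (fun J J' h => Finset.sum_le_sum_of_subset (Finset.range_subset_range.2 h)) fun b => ?_
  by_contra! hlt
  rw [ENNReal.tsum_eq_iSup_nat] at hm
  refine (ENNReal.natCast_ne_top b) (top_unique (hm ▸ iSup_le fun J => ?_))
  exact_mod_cast (hlt J).le

end Scales

theorem dist_cubeBase_cubeIndex_le (j : ℕ) (y : Torus d) :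
    dist y (cubeBase d j (cubeIndex d j y)) ≤ (2:ℝ) ^ (-(j:ℤ)) := by
  refine (dist_pi_le_iff (by positivity)).2 fun i => ?_
  set t := torusRep d y i
  have hy : y i = (t : AddCircle (1:ℝ)) := ((AddCircle.equivIco 1 0).symm_apply_apply _).symm
  have h2j : (0:ℝ) < 2 ^ j := by positivity
  have hfloor : t - ⌊t * 2 ^ j⌋ / 2 ^ j = (t * 2 ^ j - ⌊t * 2 ^ j⌋) / 2 ^ j := by
    field_simp
  calc dist (y i) (cubeBase d j (cubeIndex d j y) i)
      ≤ |t - ⌊t * 2 ^ j⌋ / 2 ^ j| := by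
        rw [hy, dist_eq_norm, ← Real.norm_eq_abs]
        exact QuotientAddGroup.norm_mk_le_norm
    _ ≤ (2:ℝ) ^ (-(j:ℤ)) := by
        rw [hfloor, abs_of_nonneg (div_nonneg (sub_nonneg.2 (Int.floor_le _)) h2j.le),
          zpow_neg, zpow_natCast, div_le_iff₀ h2j, inv_mul_cancel₀ h2j.ne']
        linarith [Int.lt_floor_add_one (t * 2 ^ j)]

theorem measurable_cubeBase_cubeIndex (j : ℕ) :
    Measurable fun y : Torus d => cubeBase d j (cubeIndex d j y) := by
  refine measurable_pi_lambda _ fun i => AddCircle.measurable_mk'.comp ?_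
  have hrep : Measurable fun y : Torus d => torusRep d y i :=
    measurable_subtype_coe.comp
      ((AddCircle.measurableEquivIco 1 0).measurable.comp (measurable_pi_apply i))
  exact ((measurable_of_countable _).comp (hrep.mul_const _).floor).div_const _

theorem min_one_pow_le_volume_dist_cubeBase_lt (x : Torus d) {j : ℕ} {r : ℝ}
    (hr : 4 * (2:ℝ) ^ (-(j:ℤ)) ≤ r) :
    min 1 (ENNReal.ofReal r) ^ d ≤ volume {y | dist x (cubeBase d j (cubeIndex d j y)) < r} := by
  have hρ : (0:ℝ) < 2 ^ (-(j:ℤ)) := by positivity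
  have hball : Metric.closedBall x (r / 2) ⊆ {y | dist x (cubeBase d j (cubeIndex d j y)) < r} :=
    fun y hy => by
      show dist x _ < r
      have := dist_cubeBase_cubeIndex_le j y
      linarith [dist_triangle x y (cubeBase d j (cubeIndex d j y)), Metric.mem_closedBall'.1 hy]
  refine le_of_eq_of_le ?_ (measure_mono hball)
  rw [closedBall_pi x (by linarith), volume_pi_pi]
  simp [AddCircle.volume_closedBall, mul_div_cancel₀]

theorem eventually_four_mul_le_rpow (hd : d ≠ 0) {φ : ℝ → ℝ}
    (hlittle : (fun r : ℝ => r ^ d) =o[𝓝[>] (0:ℝ)] φ) :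
    ∀ᶠ ρ in 𝓝[>] (0:ℝ), 0 < φ ρ → 4 * ρ ≤ φ ρ ^ (1 / (d:ℝ)) := by
  filter_upwards [hlittle.def (c := (4 ^ d)⁻¹) (by positivity), self_mem_nhdsWithin]
    with ρ hρ (hpos : 0 < ρ) hφ
  rw [norm_pow, Real.norm_of_nonneg hpos.le, Real.norm_of_nonneg hφ.le,
    le_inv_mul_iff₀ (by positivity)] at hρ
  refine (pow_le_pow_iff_left₀ (by positivity) (by positivity) hd).1 ?_
  rwa [mul_pow, one_div, Real.rpow_inv_natCast_pow hφ.le hd]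

theorem eventually_min_one_le_volume_dist_cubeBase_lt (hd : d ≠ 0) {φ : ℝ → ℝ}
    (hlittle : (fun r : ℝ => r ^ d) =o[𝓝[>] (0:ℝ)] φ) (x : Torus d) :
    ∀ᶠ j : ℕ in atTop, min 1 (ENNReal.ofReal (φ ((2:ℝ) ^ (-(j:ℤ))))) ≤ volume
      {y | dist x (cubeBase d j (cubeIndex d j y)) < φ ((2:ℝ) ^ (-(j:ℤ))) ^ (1 / (d:ℝ))} := by
  have hρ : Tendsto (fun j : ℕ => (2:ℝ) ^ (-(j:ℤ))) atTop (𝓝[>] 0) := by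
    simpa only [zpow_neg, zpow_natCast, inv_pow] using
      tendsto_pow_atTop_nhdsWithin_zero_of_lt_one (r := (2:ℝ)⁻¹) (by norm_num) (by norm_num)
  filter_upwards [hρ.eventually (eventually_four_mul_le_rpow hd hlittle)] with j hj
  set t := φ ((2:ℝ) ^ (-(j:ℤ)))
  rcases le_or_gt t 0 with ht | ht
  · -- the real power `t ^ (1 / d)` is junk here, but the left side vanishes
    simp [ENNReal.ofReal_of_nonpos ht]
  calc min 1 (ENNReal.ofReal t) = min 1 (ENNReal.ofReal (t ^ (1 / (d:ℝ)))) ^ d := by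
        rw [(pow_left_mono d).map_min, one_pow, ← ENNReal.ofReal_pow (by positivity), one_div,
          Real.rpow_inv_natCast_pow ht.le hd]
    _ ≤ _ := min_one_pow_le_volume_dist_cubeBase_lt x (hj ht)

theorem iIndepSet_preimage_of_iIndepFun {ι β : Type*} [MeasurableSpace β]
    {X : ι → Ω → β} (hX : iIndepFun X P) {E : ι → Set β} (hE : ∀ i, MeasurableSet (E i)) :
    iIndepSet (fun i => X i ⁻¹' E i) P := by
  rw [iIndepSet_iff_iIndep]
  refine iIndep_of_iIndep_of_le ((iIndepFun_iff_iIndep _ _ _).1 hX) fun i => ?_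
  exact MeasurableSpace.generateFrom_le fun t ht => (Set.mem_singleton_iff.1 ht) ▸ ⟨E i, hE i, rfl⟩

theorem ae_frequently_mem_of_iIndepFun {β : Type*} [MeasurableSpace β] {X : ℕ → Ω → β}
    (hX : ∀ n, Measurable (X n)) (hind : iIndepFun X P) {E : ℕ → Set β}
    (hE : ∀ n, MeasurableSet (E n)) (hsum : ∑' n, P (X n ⁻¹' E n) = ∞) :
    ∀ᵐ ω ∂P, ∃ᶠ n in atTop, X n ω ∈ E n := by
  have := hind.isProbabilityMeasure
  have hmeas : ∀ n, MeasurableSet (X n ⁻¹' E n) := fun n => hX n (hE n)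
  have hlimsup : limsup (fun n => X n ⁻¹' E n) atTop ∈ ae P := mem_ae_iff.2 <|
    (prob_compl_eq_zero_iff (MeasurableSet.measurableSet_limsup hmeas)).2 <|
      measure_limsup_eq_one hmeas (iIndepSet_preimage_of_iIndepFun hind hE) hsum
  filter_upwards [hlimsup] with ω hω using mem_limsup_iff_frequently_mem.1 hω

theorem ae_ae_frequently_mem_of_forall {α β : Type*} [MeasurableSpace α]
    [MeasurableSpace β] {μ : Measure α} {ν : Measure β} [SFinite μ] [SFinite ν]
    {s : ℕ → Set (α × β)} (hs : ∀ n, MeasurableSet (s n))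
    (h : ∀ y, ∀ᵐ x ∂μ, ∃ᶠ n in atTop, (x, y) ∈ s n) :
    ∀ᵐ x ∂μ, ∀ᵐ y ∂ν, ∃ᶠ n in atTop, (x, y) ∈ s n := by
  have hmeas : MeasurableSet {q : α × β | ∃ᶠ n in atTop, (q.1, q.2) ∈ s n} := by
    simpa only [Prod.mk.eta, ← mem_limsup_iff_frequently_mem, Set.ofPred_mem_eq] using
      MeasurableSet.measurableSet_limsup hs
  exact (Measure.ae_ae_comm hmeas).2 (ae_of_all _ h)

theorem mem_LsetT_of_frequently {Ω : Type*} {XX : Fin (2 ^ d - 1) → ℕ → Ω → Torus d}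
    {i : Fin (2 ^ d - 1)} {ω : Ω} {ψ : ℝ → ℝ} {x : Torus d}
    (hm : Tendsto (fun J => ∑ j ∈ Finset.range J, m i j) atTop atTop)
    (h : ∃ᶠ n in atTop, dist x (cubeBase d (scaleOf d m i n)
      (cubeIndex d (scaleOf d m i n) (XX i n ω))) < ψ ((2:ℝ) ^ (-(scaleOf d m i n : ℤ)))) :
    x ∈ LsetT d m XX ω ψ := by
  refine Set.Infinite.of_image (fun p => p.2.1) (Set.infinite_of_not_bddAbove ?_)
  rintro ⟨B, hB⟩
  obtain ⟨n, hn, hBn⟩ := (h.and_eventually ((tendsto_scaleOf hm).eventually_gt_atTop B)).exists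
  have hmem : (i, scaleOf d m i n, cubeIndex d (scaleOf d m i n) (XX i n ω)) ∈
      {p : Fin (2 ^ d - 1) × ℕ × (Fin d → ℤ) | p ∈ Mset d m XX ω ∧
        dist x (cubeBase d p.2.1 p.2.2) < ψ ((2:ℝ) ^ (-(p.2.1 : ℤ)))} :=
    ⟨⟨n, memN_of_tendsto hm n, rfl, rfl⟩, hn⟩
  exact (hB (Set.mem_image_of_mem _ hmem)).not_gt hBn

theorem ae_frequently_dist_cubeBase_lt (hM : IsRandomCubeModel d P m XX) {i : Fin (2 ^ d - 1)}
    (hm : Tendsto (fun J => ∑ j ∈ Finset.range J, m i j) atTop atTop) (x : Torus d)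
    {r : ℕ → ℝ} {a : ℕ → ℝ≥0∞} (ha : ∀ j, a j ≠ ∞)
    (hvol : ∀ᶠ j in atTop, a j ≤ volume {y | dist x (cubeBase d j (cubeIndex d j y)) < r j})
    (hdiv : ∑' j, (m i j : ℝ≥0∞) * a j = ∞) :
    ∀ᵐ ω ∂P, ∃ᶠ n in atTop, dist x (cubeBase d (scaleOf d m i n)
      (cubeIndex d (scaleOf d m i n) (XX i n ω))) < r (scaleOf d m i n) := by
  set E : ℕ → Set (Torus d) := fun j => {y | dist x (cubeBase d j (cubeIndex d j y)) < r j}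
  have hE (j : ℕ) : MeasurableSet (E j) :=
    measurableSet_lt (measurable_const.dist (measurable_cubeBase_cubeIndex j)) measurable_const
  refine ae_frequently_mem_of_iIndepFun (X := XX i) (E := fun n => E (scaleOf d m i n))
    (hM.meas i) (hM.indep.precomp (g := Prod.mk i) (Prod.mk_right_injective i)) (fun n => hE _) ?_
  show ∑' n, P (XX i n ⁻¹' E (scaleOf d m i n)) = ∞
  simp_rw [← Measure.map_apply (hM.meas i _) (hE _), hM.law,
    tsum_comp_scaleOf hm fun j => volume (E j)]
  exact tsum_eq_top_of_eventually_le (fun j => ENNReal.mul_ne_top (ENNReal.natCast_ne_top _) (ha j))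
    (hvol.mono fun j hj => by gcongr) hdiv

theorem wavelet_Lset_full_measure_general
    (hM : IsRandomCubeModel d P m XX)
    (φ : ℝ → ℝ)
    (hsum : ∑' p : Fin (2 ^ d - 1) × ℕ,
      (m p.1 p.2 : ℝ≥0∞) * ENNReal.ofReal (φ ((2:ℝ) ^ (-(p.2 : ℤ)))) = ∞)
    (hlittle : (fun r : ℝ => r ^ d) =o[𝓝[>] (0:ℝ)] φ) :
    ∀ᵐ ω ∂P,
      volume ((LsetT d m XX ω (fun r => φ r ^ (1 / (d : ℝ))))ᶜ) = 0 := by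
  have := hM.isProb
  obtain ⟨i, -, hi⟩ : ∃ i ∈ Finset.univ, ∑' j : ℕ,
      (m i j : ℝ≥0∞) * ENNReal.ofReal (φ ((2:ℝ) ^ (-(j : ℤ)))) = ∞ := by
    rwa [ENNReal.tsum_prod', tsum_fintype, ENNReal.sum_eq_top] at hsum
  have hdiv := tsum_mul_min_one_eq_top (fun j => ENNReal.ofReal_ne_top) hi
  have hm : Tendsto (fun J => ∑ j ∈ Finset.range J, m i j) atTop atTop :=
    tendsto_sum_range_of_tsum_eq_top <| top_unique <| hdiv.symm.le.trans <|
      ENNReal.tsum_le_tsum fun j => mul_le_of_le_one_right' (min_le_left _ _)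
  have hmeas (n : ℕ) : MeasurableSet {q : Ω × Torus d |
      dist q.2 (cubeBase d (scaleOf d m i n) (cubeIndex d (scaleOf d m i n) (XX i n q.1)))
        < φ ((2:ℝ) ^ (-(scaleOf d m i n : ℤ))) ^ (1 / (d:ℝ))} :=
    measurableSet_lt (measurable_snd.dist ((measurable_cubeBase_cubeIndex _).comp
      ((hM.meas i n).comp measurable_fst))) measurable_const
  have hx (x : Torus d) := ae_frequently_dist_cubeBase_lt hM hm x
    (fun j => ((min_le_left _ _).trans_lt ENNReal.one_lt_top).ne)
    (eventually_min_one_le_volume_dist_cubeBase_lt hM.dpos.ne' hlittle x) hdiv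
  filter_upwards [ae_ae_frequently_mem_of_forall (ν := volume) hmeas hx] with ω hω
  exact ae_iff.1 (hω.mono fun x hx => mem_LsetT_of_frequently hm hx)

/-- **Lemma 15, second half.** If `Σ_{i,j} m_{i,j} φ(2^{-j}) = ∞` and `r^d = o(φ(r))`
as `r → 0`, then almost surely the set `L_{φ^{1/d}}` has full Lebesgue (Haar) measure
in `𝕋^d`. -/
theorem wavelet_Lset_full_measure
    (hM : IsRandomCubeModel d P m XX)
    (φ : ℝ → ℝ) (hφc : ContinuousOn φ (Ici (0:ℝ))) (hφm : MonotoneOn φ (Ici (0:ℝ)))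
    (hφ0 : φ 0 = 0)
    (hsum : ∑' p : Fin (2 ^ d - 1) × ℕ,
      (m p.1 p.2 : ℝ≥0∞) * ENNReal.ofReal (φ ((2:ℝ) ^ (-(p.2 : ℤ)))) = ∞)
    (hlittle : (fun r : ℝ => r ^ d) =o[𝓝[>] (0:ℝ)] φ) :
    ∀ᵐ ω ∂P,
      volume ((LsetT d m XX ω (fun r => φ r ^ (1 / (d : ℝ))))ᶜ) = 0 :=
  wavelet_Lset_full_measure_general hM φ hsum hlittle

end WaveletFractal
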